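/- arXiv:1009.4777 — 4 statements merged into one kernel-verified Lean document; each statement's English description precedes it below -/
import Mathlib

section
/- For any real parameter b, the function w(x) = (1/(1+b^2))^{1/4} * sqrt(1 + b^2 cos^2 x) is positive, 2π-periodic, and satisfies w(x)^3 (w''(x) + w(x)) = 1 for all real x. -/
/-!
`w` is the support function `x ↦ √(A cos² x + B sin² x)` of the ellipse with semi-axes `√A = c √(1 + b²)`
and `√B = c`, where `c = (1 + b²)^(-1/4)`. For any such support function `h`, differentiating
`h² = A cos² + B sin²` twice gives `h³ (h'' + h) = (A cos² + B sin²)(B cos² + A sin²) - (B - A)² sin² cos² = A B`,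
and the normalisation by `c` makes `A B = c⁴ (1 + b²) = 1`.
-/

open Real

noncomputable section

def ellipseSupport (A B x : ℝ) : ℝ := √(A * cos x ^ 2 + B * sin x ^ 2)

namespace ellipseSupport

variable {A B : ℝ}

lemma radicand_pos (hA : 0 < A) (hB : 0 < B) (x : ℝ) : 0 < A * cos x ^ 2 + B * sin x ^ 2 := by
  rcases le_total A B with h | h
  · nlinarith [sin_sq_add_cos_sq x, mul_le_mul_of_nonneg_right h (sq_nonneg (sin x))]
  · nlinarith [sin_sq_add_cos_sq x, mul_le_mul_of_nonneg_right h (sq_nonneg (cos x))]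

lemma pos (hA : 0 < A) (hB : 0 < B) (x : ℝ) : 0 < ellipseSupport A B x :=
  sqrt_pos.mpr (radicand_pos hA hB x)

lemma sq (hA : 0 ≤ A) (hB : 0 ≤ B) (x : ℝ) :
    ellipseSupport A B x ^ 2 = A * cos x ^ 2 + B * sin x ^ 2 :=
  sq_sqrt (by positivity)

lemma add_two_pi (A B x : ℝ) : ellipseSupport A B (x + 2 * π) = ellipseSupport A B x := by
  simp only [ellipseSupport, cos_add_two_pi, sin_add_two_pi]

lemma hasDerivAt (hA : 0 < A) (hB : 0 < B) (x : ℝ) :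
    HasDerivAt (ellipseSupport A B) ((B - A) * sin x * cos x / ellipseSupport A B x) x := by
  have hq : HasDerivAt (fun y => A * cos y ^ 2 + B * sin y ^ 2) (2 * ((B - A) * sin x * cos x)) x :=
    ((((hasDerivAt_cos x).pow 2).const_mul A).add
      (((hasDerivAt_sin x).pow 2).const_mul B)).congr_deriv (by norm_num; ring)
  refine (hq.sqrt (radicand_pos hA hB x).ne').congr_deriv ?_
  rw [ellipseSupport, mul_div_mul_left _ _ two_ne_zero]

lemma deriv_eq (hA : 0 < A) (hB : 0 < B) :
    deriv (ellipseSupport A B) = fun x => (B - A) * sin x * cos x / ellipseSupport A B x :=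
  funext fun x => (hasDerivAt hA hB x).deriv

lemma hasDerivAt_deriv (hA : 0 < A) (hB : 0 < B) (x : ℝ) :
    HasDerivAt (deriv (ellipseSupport A B))
      (((B - A) * (cos x ^ 2 - sin x ^ 2) * ellipseSupport A B x -
          (B - A) * sin x * cos x * ((B - A) * sin x * cos x / ellipseSupport A B x)) /
        ellipseSupport A B x ^ 2) x := by
  have hnum : HasDerivAt (fun y => (B - A) * sin y * cos y) ((B - A) * (cos x ^ 2 - sin x ^ 2)) x :=
    (((hasDerivAt_sin x).const_mul (B - A)).mul (hasDerivAt_cos x)).congr_deriv (by ring)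
  rw [deriv_eq hA hB]
  exact hnum.div (hasDerivAt hA hB x) (pos hA hB x).ne'

theorem pow_three_mul_deriv_deriv_add_self (hA : 0 < A) (hB : 0 < B) (x : ℝ) :
    ellipseSupport A B x ^ 3 * (deriv (deriv (ellipseSupport A B)) x + ellipseSupport A B x) =
      A * B := by
  rw [(hasDerivAt_deriv hA hB x).deriv]
  have hpos := pos hA hB x
  have hsq := sq hA.le hB.le x
  field_simp
  rw [show ellipseSupport A B x ^ 4 = (ellipseSupport A B x ^ 2) ^ 2 by ring, hsq]
  linear_combination (A * B * (sin x ^ 2 + cos x ^ 2 + 1)) * sin_sq_add_cos_sq x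

end ellipseSupport

end

theorem stmt_0 (b : ℝ) (w : ℝ → ℝ)
    (hw : w = fun x => (1 / (1 + b ^ 2)) ^ ((1 : ℝ) / 4) * Real.sqrt (1 + b ^ 2 * Real.cos x ^ 2)) :
    ∀ x : ℝ, 0 < w x ∧ w (x + 2 * Real.pi) = w x ∧
      w x ^ 3 * (deriv (deriv w) x + w x) = 1 := by
  set c : ℝ := (1 / (1 + b ^ 2)) ^ ((1 : ℝ) / 4) with hc
  have hc_pos : 0 < c := by positivity
  have hc4 : c ^ 4 * (1 + b ^ 2) = 1 := by
    rw [hc, ← rpow_natCast, ← rpow_mul (by positivity)]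
    norm_num
    field_simp
  have hA : 0 < c ^ 2 * (1 + b ^ 2) := by positivity
  have hB : 0 < c ^ 2 := by positivity
  have hw_eq : w = ellipseSupport (c ^ 2 * (1 + b ^ 2)) (c ^ 2) := by
    funext x
    rw [hw, ellipseSupport, show c ^ 2 * (1 + b ^ 2) * cos x ^ 2 + c ^ 2 * sin x ^ 2 =
      c ^ 2 * (1 + b ^ 2 * cos x ^ 2) by linear_combination c ^ 2 * sin_sq_add_cos_sq x,
      sqrt_mul (sq_nonneg c), sqrt_sq hc_pos.le]
  intro x
  subst hw_eq
  refine ⟨ellipseSupport.pos hA hB x, ellipseSupport.add_two_pi _ _ x, ?_⟩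
  rw [ellipseSupport.pow_three_mul_deriv_deriv_add_self hA hB x]
  linear_combination hc4
end

section
/- Let p > 2 and c > 0, and choose λ₁ with p/√(p−1) < λ₁ < p/c and λ₂ = p/c. Set h* = (p − cλ₁)/(p + λ₁²/p). Then h* > 0, and along the half-line G = λ₁H with 0 ≤ H ≤ h*, the vector field X_c(H,G) = (HG, −pH² + pH − cG + ((p−1)/p)G²) satisfies ⟨X_c, (−λ₁, 1)⟩ = (p − cλ₁ − (p + λ₁²/p)H) H ≥ 0, with equality only at H = 0 and H = h*. -/
open Real

/-! On the ray `G = λ₁ H` the normal component of `X_c` is the quadratic `(a - b H) H` with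
`a = p - c λ₁ > 0` (as `λ₁ < p / c`) and `b = p + λ₁² / p > 0`, which is nonnegative exactly
between its roots `0` and `a / b = h*`. -/

theorem sub_mul_mul_self_nonneg {a b H : ℝ} (hb : 0 < b) (hH : 0 ≤ H) (hHab : H ≤ a / b) :
    0 ≤ (a - b * H) * H :=
  mul_nonneg (by linarith [(le_div_iff₀' hb).mp hHab]) hH

theorem sub_mul_mul_self_eq_zero_iff {a b H : ℝ} (hb : b ≠ 0) :
    (a - b * H) * H = 0 ↔ H = 0 ∨ H = a / b := by
  rw [mul_eq_zero, sub_eq_zero, eq_div_iff hb, eq_comm, mul_comm H, or_comm]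

theorem inner_vectorField_normal_on_ray {p c lam1 : ℝ} (hp : p ≠ 0) (H : ℝ) :
    (-lam1) * (H * (lam1 * H)) +
        (-p * H ^ 2 + p * H - c * (lam1 * H) + ((p - 1) / p) * (lam1 * H) ^ 2)
      = (p - c * lam1 - (p + lam1 ^ 2 / p) * H) * H := by
  field_simp
  ring

theorem stmt_15_general (p c lam1 h : ℝ) (hp : 2 < p) (hc : 0 < c)
    (hlam1' : lam1 < p / c)
    (hs : h = (p - c * lam1) / (p + lam1 ^ 2 / p)) :
    0 < h ∧
      ∀ H : ℝ, 0 ≤ H → H ≤ h →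
        (-lam1) * (H * (lam1 * H)) +
            (-p * H ^ 2 + p * H - c * (lam1 * H) + ((p - 1) / p) * (lam1 * H) ^ 2)
          = (p - c * lam1 - (p + lam1 ^ 2 / p) * H) * H ∧
        0 ≤ (p - c * lam1 - (p + lam1 ^ 2 / p) * H) * H ∧
        ((p - c * lam1 - (p + lam1 ^ 2 / p) * H) * H = 0 ↔ H = 0 ∨ H = h) := by
  have hp0 : 0 < p := by linarith
  have ha : 0 < p - c * lam1 := by linarith [(lt_div_iff₀' hc).mp hlam1']
  have hb : 0 < p + lam1 ^ 2 / p := by positivity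
  subst hs
  exact ⟨div_pos ha hb, fun H hH hHh =>
    ⟨inner_vectorField_normal_on_ray hp0.ne' H, sub_mul_mul_self_nonneg hb hH hHh,
      sub_mul_mul_self_eq_zero_iff hb.ne'⟩⟩

theorem stmt_15 (p c lam1 h : ℝ) (hp : 2 < p) (hc : 0 < c)
    (hlam1 : p / Real.sqrt (p - 1) < lam1) (hlam1' : lam1 < p / c)
    (hs : h = (p - c * lam1) / (p + lam1 ^ 2 / p)) :
    0 < h ∧
      ∀ H : ℝ, 0 ≤ H → H ≤ h →
        (-lam1) * (H * (lam1 * H)) +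
            (-p * H ^ 2 + p * H - c * (lam1 * H) + ((p - 1) / p) * (lam1 * H) ^ 2)
          = (p - c * lam1 - (p + lam1 ^ 2 / p) * H) * H ∧
        0 ≤ (p - c * lam1 - (p + lam1 ^ 2 / p) * H) * H ∧
        ((p - c * lam1 - (p + lam1 ^ 2 / p) * H) * H = 0 ↔ H = 0 ∨ H = h) :=
  stmt_15_general p c lam1 h hp hc hlam1' hs
end

section
/- Let p > 2 and c > 0. On the set of points (H,G) with G = λH, λ₁ ≤ λ ≤ p/c, and 0 < H ≤ h* = (p − cλ₁)/(p + λ₁²/p), where λ₁ satisfies p/√(p−1) < λ₁ < p/c, the second component of the ODE system H_ξ = G, G_ξ = (−pH² + pH − cG + ((p−1)/p)G²)/H satisfies G_ξ = (p − cλ) + (((p−1)/p)λ² − p)H ≥ (((p−1)/p)λ₁² − p)H > 0. -/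
/-!
Along the ray `G = λH` the quotient defining `G_ξ` is affine in `H`, with constant term
`p - cλ ≥ 0` (as `λ ≤ p/c`) and slope `((p-1)/p)λ² - p`, which increases with `λ > 0`.
At `λ = λ₁` the slope is already positive, because `λ₁ > p/√(p-1)` means `λ₁² > p²/(p-1)`.
-/

open Real

lemma quadratic_on_ray_div (p c q l H : ℝ) (hH : H ≠ 0) :
    (-p * H ^ 2 + p * H - c * (l * H) + q * (l * H) ^ 2) / H
      = (p - c * l) + (q * l ^ 2 - p) * H := by
  field_simp
  ring

lemma sq_div_sub_one_lt_sq {p lam : ℝ} (hp : 1 < p) (hlam : p / √(p - 1) < lam) :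
    p ^ 2 / (p - 1) < lam ^ 2 := by
  have hp1 : 0 < p - 1 := by linarith
  have hpos : 0 ≤ p / √(p - 1) := div_nonneg (by linarith) (sqrt_nonneg _)
  calc p ^ 2 / (p - 1) = (p / √(p - 1)) ^ 2 := by rw [div_pow, sq_sqrt hp1.le]
    _ < lam ^ 2 := pow_lt_pow_left₀ hlam hpos two_ne_zero

lemma slope_pos_of_div_sqrt_lt {p lam : ℝ} (hp : 1 < p) (hlam : p / √(p - 1) < lam) :
    0 < ((p - 1) / p) * lam ^ 2 - p := by
  have hp0 : 0 < p := by linarith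
  have hp1 : 0 < p - 1 := by linarith
  have hsq := sq_div_sub_one_lt_sq hp hlam
  rw [div_lt_iff₀ hp1] at hsq
  rw [sub_pos, div_mul_eq_mul_div, lt_div_iff₀ hp0]
  nlinarith

lemma slope_mul_le_affine {p c q lam l H : ℝ} (hq : 0 ≤ q) (hlam : 0 < lam) (hl : lam ≤ l)
    (hcl : c * l ≤ p) (hH : 0 ≤ H) :
    (q * lam ^ 2 - p) * H ≤ (p - c * l) + (q * l ^ 2 - p) * H := by
  have hsq : lam ^ 2 ≤ l ^ 2 := pow_le_pow_left₀ hlam.le hl 2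
  have hslope : (q * lam ^ 2 - p) * H ≤ (q * l ^ 2 - p) * H := by gcongr
  linarith

theorem stmt_16_general (p c lam1 l H : ℝ) (hp : 2 < p) (hc : 0 < c)
    (hlam1 : p / Real.sqrt (p - 1) < lam1)
    (hl : lam1 ≤ l) (hl' : l ≤ p / c)
    (hH : 0 < H) :
    (-p * H ^ 2 + p * H - c * (l * H) + ((p - 1) / p) * (l * H) ^ 2) / H
        = (p - c * l) + (((p - 1) / p) * l ^ 2 - p) * H ∧
      (((p - 1) / p) * lam1 ^ 2 - p) * H
        ≤ (p - c * l) + (((p - 1) / p) * l ^ 2 - p) * H ∧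
      0 < (((p - 1) / p) * lam1 ^ 2 - p) * H := by
  have hp1 : 1 < p := by linarith
  have hslope := slope_pos_of_div_sqrt_lt hp1 hlam1
  have hlam1_pos : 0 < lam1 :=
    lt_of_le_of_lt (div_nonneg (by linarith) (sqrt_nonneg _)) hlam1
  have hcl : c * l ≤ p := by
    rw [le_div_iff₀ hc] at hl'
    linarith
  refine ⟨quadratic_on_ray_div p c _ l H hH.ne', ?_, mul_pos hslope hH⟩
  exact slope_mul_le_affine (div_nonneg (by linarith) (by linarith)) hlam1_pos hl hcl hH.le

theorem stmt_16 (p c lam1 l h H : ℝ) (hp : 2 < p) (hc : 0 < c)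
    (hlam1 : p / Real.sqrt (p - 1) < lam1) (hlam1' : lam1 < p / c)
    (hl : lam1 ≤ l) (hl' : l ≤ p / c)
    (hs : h = (p - c * lam1) / (p + lam1 ^ 2 / p))
    (hH : 0 < H) (hH' : H ≤ h) :
    (-p * H ^ 2 + p * H - c * (l * H) + ((p - 1) / p) * (l * H) ^ 2) / H
        = (p - c * l) + (((p - 1) / p) * l ^ 2 - p) * H ∧
      (((p - 1) / p) * lam1 ^ 2 - p) * H
        ≤ (p - c * l) + (((p - 1) / p) * l ^ 2 - p) * H ∧
      0 < (((p - 1) / p) * lam1 ^ 2 - p) * H :=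
  stmt_16_general p c lam1 l H hp hc hlam1 hl hl' hH
end

section
/- Let p ≥ 2 and let g₁, g₂ be two solutions on an interval (0, ε) of the ODE g'(H) = ((p−1)g(H) − pc)/(pH) + (p − pH)/g(H), with c > 0, such that 0 < g₁(H) < g₂(H) ≤ λH on (0,ε) for some λ > 0, and g₂(H) − g₁(H) → 0 as H → 0⁺. Then the difference w = g₂ − g₁ satisfies w'(H) = ((p−1)/(pH) − (p − pH)/(g₁(H)g₂(H))) w(H), and for H sufficiently small, w'(H) < 0; consequently no two such distinct solutions exist (w ≡ 0), a contradiction with w > 0. -/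
/-!
The difference `w = g₂ - g₁` of two solutions solves the linear equation `w' = a w` with
`a(H) = (p - 1)/(p H) - (p - p H)/(g₁ g₂)`. Since `g₁ g₂ ≤ λ² H²`, the second term is at least of
order `1/H²` and beats the first one, of order `1/H`, so `a < 0` near `0`. Hence `w` is
decreasing near `0`; being positive there, it cannot tend to `0` as `H → 0⁺`.
-/

open Set Filter Topology

noncomputable def odeRhs (p c H g : ℝ) : ℝ := ((p - 1) * g - p * c) / (p * H) + (p - p * H) / g

noncomputable def diffCoeff (p H x y : ℝ) : ℝ := (p - 1) / (p * H) - (p - p * H) / (x * y)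

lemma odeRhs_sub_odeRhs {p c H x y : ℝ} (hp : p ≠ 0) (hH : H ≠ 0) (hx : x ≠ 0) (hy : y ≠ 0) :
    odeRhs p c H y - odeRhs p c H x = diffCoeff p H x y * (y - x) := by
  unfold odeRhs diffCoeff
  field_simp
  ring

lemma diffCoeff_neg {p H lam x y : ℝ} (hp : 1 ≤ p) (hH : 0 < H)
    (hHsmall : H * ((p - 1) * lam ^ 2 + p ^ 2) < p ^ 2)
    (hx : 0 < x) (hxH : x ≤ lam * H) (hy : 0 < y) (hyH : y ≤ lam * H) :
    diffCoeff p H x y < 0 := by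
  have hxy : x * y ≤ (lam * H) ^ 2 := by
    rw [sq]
    exact mul_le_mul hxH hyH hy.le (hx.le.trans hxH)
  have hp0 : 0 < p := by linarith
  rw [diffCoeff, sub_neg, div_lt_div_iff₀ (by positivity) (by positivity)]
  nlinarith [mul_le_mul_of_nonneg_left hxy (sub_nonneg.2 hp)]

lemma le_of_tendsto_nhdsGT_of_hasDerivAt_neg {f f' : ℝ → ℝ} {a b l x : ℝ}
    (hf : ∀ y ∈ Ioo a b, HasDerivAt f (f' y) y) (hf' : ∀ y ∈ Ioo a b, f' y < 0)
    (hlim : Tendsto f (𝓝[>] a) (𝓝 l)) (hx : x ∈ Ioo a b) : f x ≤ l := by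
  have hanti : StrictAntiOn f (Ioo a b) :=
    strictAntiOn_of_hasDerivWithinAt_neg (convex_Ioo a b)
      (fun y hy => (hf y hy).continuousAt.continuousWithinAt)
      (by simpa only [interior_Ioo] using fun y hy => (hf y hy).hasDerivWithinAt)
      (by simpa only [interior_Ioo] using hf')
  refine ge_of_tendsto hlim ?_
  filter_upwards [Ioo_mem_nhdsGT hx.1] with y hy
  exact (hanti ⟨hy.1, hy.2.trans hx.2⟩ hx hy.2).le

theorem stmt_19_general (p c ε lam : ℝ) (hp : 2 ≤ p) (hε : 0 < ε)
    (g₁ g₂ : ℝ → ℝ)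
    (hg₁ : ∀ H ∈ Set.Ioo (0 : ℝ) ε,
      HasDerivAt g₁ (((p - 1) * g₁ H - p * c) / (p * H) + (p - p * H) / g₁ H) H)
    (hg₂ : ∀ H ∈ Set.Ioo (0 : ℝ) ε,
      HasDerivAt g₂ (((p - 1) * g₂ H - p * c) / (p * H) + (p - p * H) / g₂ H) H)
    (horder : ∀ H ∈ Set.Ioo (0 : ℝ) ε, 0 < g₁ H ∧ g₁ H < g₂ H ∧ g₂ H ≤ lam * H)
    (hlim : Filter.Tendsto (fun H => g₂ H - g₁ H) (nhdsWithin 0 (Set.Ioi 0)) (nhds 0)) :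
    (∀ H ∈ Set.Ioo (0 : ℝ) ε,
      HasDerivAt (fun H => g₂ H - g₁ H)
        (((p - 1) / (p * H) - (p - p * H) / (g₁ H * g₂ H)) * (g₂ H - g₁ H)) H) ∧
    (∃ δ : ℝ, 0 < δ ∧ δ ≤ ε ∧ ∀ H ∈ Set.Ioo (0 : ℝ) δ,
      ((p - 1) / (p * H) - (p - p * H) / (g₁ H * g₂ H)) * (g₂ H - g₁ H) < 0) ∧
    False := by
  have hderiv : ∀ H ∈ Ioo 0 ε, HasDerivAt (fun H => g₂ H - g₁ H)
      (diffCoeff p H (g₁ H) (g₂ H) * (g₂ H - g₁ H)) H := by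
    intro H hH
    obtain ⟨h₁, h₁₂, -⟩ := horder H hH
    rw [← odeRhs_sub_odeRhs (c := c) (by linarith) hH.1.ne' h₁.ne' (h₁.trans h₁₂).ne']
    exact (hg₂ H hH).sub (hg₁ H hH)
  set δ := min ε (p ^ 2 / ((p - 1) * lam ^ 2 + p ^ 2))
  have hp1 : 0 ≤ p - 1 := by linarith
  have hδ : 0 < δ := lt_min hε (by positivity)
  have hδε : Ioo 0 δ ⊆ Ioo 0 ε := Ioo_subset_Ioo_right (min_le_left _ _)
  have hneg : ∀ H ∈ Ioo 0 δ, diffCoeff p H (g₁ H) (g₂ H) * (g₂ H - g₁ H) < 0 := by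
    intro H hH
    obtain ⟨h₁, h₁₂, h₂⟩ := horder H (hδε hH)
    have hHsmall : H * ((p - 1) * lam ^ 2 + p ^ 2) < p ^ 2 :=
      (lt_div_iff₀ (by positivity)).1 (hH.2.trans_le (min_le_right _ _))
    exact mul_neg_of_neg_of_pos
      (diffCoeff_neg (by linarith) hH.1 hHsmall h₁ (h₁₂.le.trans h₂) (h₁.trans h₁₂) h₂)
      (sub_pos.2 h₁₂)
  refine ⟨hderiv, ⟨δ, hδ, min_le_left _ _, hneg⟩, ?_⟩
  have hmid : δ / 2 ∈ Ioo 0 δ := ⟨half_pos hδ, half_lt_self hδ⟩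
  have hw_nonpos : g₂ (δ / 2) - g₁ (δ / 2) ≤ 0 :=
    le_of_tendsto_nhdsGT_of_hasDerivAt_neg (f := fun H => g₂ H - g₁ H)
      (fun H hH => hderiv H (hδε hH)) hneg hlim hmid
  linarith [(horder (δ / 2) (hδε hmid)).2.1]

theorem stmt_19 (p c ε lam : ℝ) (hp : 2 ≤ p) (hc : 0 < c) (hε : 0 < ε) (hlam : 0 < lam)
    (g₁ g₂ : ℝ → ℝ)
    (hg₁ : ∀ H ∈ Set.Ioo (0 : ℝ) ε,
      HasDerivAt g₁ (((p - 1) * g₁ H - p * c) / (p * H) + (p - p * H) / g₁ H) H)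
    (hg₂ : ∀ H ∈ Set.Ioo (0 : ℝ) ε,
      HasDerivAt g₂ (((p - 1) * g₂ H - p * c) / (p * H) + (p - p * H) / g₂ H) H)
    (horder : ∀ H ∈ Set.Ioo (0 : ℝ) ε, 0 < g₁ H ∧ g₁ H < g₂ H ∧ g₂ H ≤ lam * H)
    (hlim : Filter.Tendsto (fun H => g₂ H - g₁ H) (nhdsWithin 0 (Set.Ioi 0)) (nhds 0)) :
    (∀ H ∈ Set.Ioo (0 : ℝ) ε,
      HasDerivAt (fun H => g₂ H - g₁ H)
        (((p - 1) / (p * H) - (p - p * H) / (g₁ H * g₂ H)) * (g₂ H - g₁ H)) H) ∧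
    (∃ δ : ℝ, 0 < δ ∧ δ ≤ ε ∧ ∀ H ∈ Set.Ioo (0 : ℝ) δ,
      ((p - 1) / (p * H) - (p - p * H) / (g₁ H * g₂ H)) * (g₂ H - g₁ H) < 0) ∧
    False :=
  stmt_19_general p c ε lam hp hε g₁ g₂ hg₁ hg₂ horder hlim
end
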